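/- The duality map F : Δ → ℂ, F(z) = z/√(1 − |z|²), satisfies F*ω₊ = ω₀; that is, for all z ∈ Δ and all u, v ∈ ℂ, ω₊(F(z))(DF(z)u, DF(z)v) = ω₀(u,v). -/

import Mathlib

open Complex Set

noncomputable section

/-- The open unit disc in `ℂ`. -/
def unitDisc : Set ℂ := {z : ℂ | ‖z‖ < 1}

/-- The flat symplectic form `ω₀(u,v) = Im (conj u * v)` on `ℂ`. -/
def omega0 (u v : ℂ) : ℝ := ((starRingEnd ℂ) u * v).im

/-- The hyperbolic symplectic form `ω₋(z)(u,v) = Im (conj u * v) / (1 - |z|²)²` on the disc. -/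
def omegaMinus (z u v : ℂ) : ℝ := ((starRingEnd ℂ) u * v).im / (1 - ‖z‖ ^ 2) ^ 2

/-- `f` is a smooth diffeomorphism of `s` onto `t`: it is `C^∞` on `s`, maps `s` to `t`,
and has a `C^∞` inverse mapping `t` to `s`. -/
def IsSmoothDiffeoOn {E F : Type*} [NormedAddCommGroup E] [NormedSpace ℝ E]
    [NormedAddCommGroup F] [NormedSpace ℝ F] (f : E → F) (s : Set E) (t : Set F) : Prop :=
  ContDiffOn ℝ (⊤ : ℕ∞) f s ∧ Set.MapsTo f s t ∧
    ∃ g : F → E, ContDiffOn ℝ (⊤ : ℕ∞) g t ∧ Set.MapsTo g t s ∧ Set.InvOn g f s t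


/-- The Fubini-Study form `ω₊(z)(u,v) = Im (conj u * v) / (1 + |z|²)²` on `ℂ`. -/
def omegaPlus (z u v : ℂ) : ℝ := ((starRingEnd ℂ) u * v).im / (1 + ‖z‖ ^ 2) ^ 2

/-- The duality map `F(z) = z / √(1 - |z|²)` of the unit disc. -/
def dualityMap (z : ℂ) : ℂ := z / (Real.sqrt (1 - ‖z‖ ^ 2) : ℂ)

/-!
Write `t = 1 - |z|²`. The differential of the radial map `F(z) = t^{-1/2} z` is
`DF(z)u = t^{-1/2} u + t^{-3/2} ⟨z, u⟩ z`, and the identity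
`⟨z,u⟩ ω₀(z,v) - ⟨z,v⟩ ω₀(z,u) = |z|² ω₀(u,v)` collapses `F*ω₀` to
`t^{-1/2} (t^{-1/2} + t^{-3/2} |z|²) ω₀ = t⁻² ω₀`. Since `1 + |F(z)|² = t⁻¹`, the Fubini–Study
conformal factor `(1 + |F(z)|²)⁻²` is exactly `t²`.
-/

open InnerProductSpace

lemma inner_mul_omega0_sub_inner_mul_omega0 (z u v : ℂ) :
    ⟪z, u⟫_ℝ * omega0 z v - ⟪z, v⟫_ℝ * omega0 z u = ‖z‖ ^ 2 * omega0 u v := by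
  simp only [omega0, Complex.inner, Complex.sq_norm, Complex.normSq_apply, Complex.mul_re,
    Complex.mul_im, Complex.conj_re, Complex.conj_im]
  ring

lemma omega0_smul_add_smul (a b c : ℝ) (z u v : ℂ) :
    omega0 (a • u + b • z) (a • v + c • z)
      = a ^ 2 * omega0 u v + a * (b * omega0 z v - c * omega0 z u) := by
  simp only [omega0, Complex.real_smul, map_add, map_mul, Complex.conj_ofReal, Complex.mul_im,
    Complex.add_im, Complex.add_re, Complex.mul_re, Complex.ofReal_re, Complex.ofReal_im,
    Complex.conj_re, Complex.conj_im]
  ring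

lemma omega0_smul_add_inner_smul (a k : ℝ) (z u v : ℂ) :
    omega0 (a • u + (k * ⟪z, u⟫_ℝ) • z) (a • v + (k * ⟪z, v⟫_ℝ) • z)
      = a * (a + k * ‖z‖ ^ 2) * omega0 u v := by
  rw [omega0_smul_add_smul, mul_assoc k, mul_assoc k, ← mul_sub,
    inner_mul_omega0_sub_inner_mul_omega0]
  ring

lemma omegaPlus_eq_omega0_div (w u v : ℂ) :
    omegaPlus w u v = omega0 u v / (1 + ‖w‖ ^ 2) ^ 2 :=
  rfl

lemma one_sub_norm_sq_pos {E : Type*} [SeminormedAddGroup E] {z : E} (hz : ‖z‖ < 1) :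
    0 < 1 - ‖z‖ ^ 2 :=
  sub_pos.2 (pow_lt_one₀ (norm_nonneg z) hz two_ne_zero)

lemma hasFDerivAt_inv_sqrt_one_sub_norm_sq {E : Type*} [NormedAddCommGroup E]
    [InnerProductSpace ℝ E] {z : E} (hz : ‖z‖ < 1) :
    HasFDerivAt (fun w : E => (√(1 - ‖w‖ ^ 2))⁻¹)
      (((√(1 - ‖z‖ ^ 2))⁻¹ / (1 - ‖z‖ ^ 2)) • innerSL ℝ z) z := by
  have ht := one_sub_norm_sq_pos hz
  have hs : 0 < √(1 - ‖z‖ ^ 2) := Real.sqrt_pos.2 ht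
  refine ((hasDerivAt_inv hs.ne').comp_hasFDerivAt z
    (((hasFDerivAt_const (1 : ℝ) z).sub (hasFDerivAt_id z).norm_sq).sqrt ht.ne')).congr_fderiv ?_
  ext u
  simp only [id_eq, Pi.sub_apply, one_div, mul_inv_rev, ContinuousLinearMap.comp_id, zero_sub,
    smul_neg, neg_smul, neg_neg, smul_apply, coe_innerSL_apply, nsmul_eq_mul,
    Nat.cast_ofNat, smul_eq_mul]
  field_simp
  rw [Real.sq_sqrt ht.le]

lemma dualityMap_eq_smul (z : ℂ) : dualityMap z = (√(1 - ‖z‖ ^ 2))⁻¹ • z := by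
  rw [dualityMap, div_eq_inv_mul, Complex.real_smul, Complex.ofReal_inv]

lemma fderiv_dualityMap_apply {z : ℂ} (hz : ‖z‖ < 1) (u : ℂ) :
    fderiv ℝ dualityMap z u = (√(1 - ‖z‖ ^ 2))⁻¹ • u
      + ((√(1 - ‖z‖ ^ 2))⁻¹ / (1 - ‖z‖ ^ 2) * ⟪z, u⟫_ℝ) • z := by
  have h : HasFDerivAt (fun w : ℂ => (√(1 - ‖w‖ ^ 2))⁻¹ • w) _ z :=
    (hasFDerivAt_inv_sqrt_one_sub_norm_sq hz).smul (hasFDerivAt_id z)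
  rw [show dualityMap = _ from funext dualityMap_eq_smul, h.fderiv]
  simp [mul_smul]

lemma one_add_norm_sq_dualityMap {z : ℂ} (hz : ‖z‖ < 1) :
    1 + ‖dualityMap z‖ ^ 2 = (1 - ‖z‖ ^ 2)⁻¹ := by
  have ht := one_sub_norm_sq_pos hz
  rw [dualityMap_eq_smul, norm_smul, mul_pow, norm_inv, Real.norm_of_nonneg (Real.sqrt_nonneg _),
    inv_pow, Real.sq_sqrt ht.le]
  field_simp
  ring

/-- The duality map pulls the Fubini-Study form back to the flat form: `F*ω₊ = ω₀`. -/
theorem dualityMap_pullback_fubiniStudy_eq_flat :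
    ∀ z ∈ unitDisc, ∀ u v : ℂ,
      omegaPlus (dualityMap z) (fderiv ℝ dualityMap z u) (fderiv ℝ dualityMap z v)
        = omega0 u v := by
  intro z hz u v
  have ht := one_sub_norm_sq_pos (show ‖z‖ < 1 from hz)
  rw [omegaPlus_eq_omega0_div, fderiv_dualityMap_apply hz, fderiv_dualityMap_apply hz,
    omega0_smul_add_inner_smul, one_add_norm_sq_dualityMap hz]
  field_simp
  rw [Real.sq_sqrt ht.le]
  ring
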